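/- Logarithmic convexity of outer L^p quasi-norms in the size exponent (Proposition 8.6): Let X be a metric space equipped with a Borel measure ν and an outer measure μ. For 0 < r < ∞ and Borel A ⊆ X define ℓ^r(f)(A) = (μ(A)^{-1} ∫_A f^r dν)^{1/r} and ℓ^∞(f)(A) = ess sup_A f, and define the associated outer quasi-norms as below. Then for every 0 < p ≤ ∞ and 0 < r_1 < r < r_2 ≤ ∞ there exists a constant C = C(p, r, r_1, r_2) such that for every nonnegative Borel function f on X: ‖f‖_{L^p(ℓ^r)} ≤ C (‖f‖_{L^p(ℓ^{r_1})} + ‖f‖_{L^p(ℓ^{r_2})}) and ‖f‖_{L^{p,∞}(ℓ^r)} ≤ C (‖f‖_{L^{p,∞}(ℓ^{r_1})} + ‖f‖_{L^{p,∞}(ℓ^{r_2})}). -/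

import Mathlib

/-! Hölder's inequality (for `r₂ = ∞`, the bound `f ≤ ess sup f` on `A`) makes `ℓ^r(f)(A)` a
weighted geometric mean of `ℓ^{r₁}(f)(A)` and `ℓ^{r₂}(f)(A)`, so it is at most their maximum.
Hence if deleting `A₁` brings the `ℓ^{r₁}`-size of `f` down to `λ` and deleting `A₂` does so
for the `ℓ^{r₂}`-size, then deleting `A₁ ∪ A₂` does so for the `ℓ^r`-size, and subadditivity
of `μ` gives `μ(ℓ^r(f) > λ) ≤ μ(ℓ^{r₁}(f) > λ) + μ(ℓ^{r₂}(f) > λ)`. Integrating, or taking the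
supremum, in `λ` and using the quasi-triangle inequality for `x ↦ x^{1/p}` gives the claim. -/

open MeasureTheory Set
open scoped ENNReal

noncomputable section

/-- The outer `ℓ^r` size associated with an outer measure `μ` and a Borel measure `ν`:
for `r < ∞`, `ℓ^r(f)(A) = (μ(A)⁻¹ ∫_A f^r dν)^{1/r}`; for `r = ∞` the `ν`-essential
supremum of `f` on `A`. -/
def ellSize {X : Type*} [MeasurableSpace X] (μ : Set X → ℝ≥0∞) (ν : MeasureTheory.Measure X)
    (r : ℝ≥0∞) (f : X → ℝ≥0∞) (A : Set X) : ℝ≥0∞ :=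
  if r = ∞ then essSup f (ν.restrict A)
  else ((μ A)⁻¹ * ∫⁻ x in A, f x ^ r.toReal ∂ν) ^ r.toReal⁻¹

/-- The outer `L^∞(ℓ^r)` quasi-norm: supremum of the size over Borel sets. -/
def outerSup {X : Type*} [MeasurableSpace X] (μ : Set X → ℝ≥0∞) (ν : MeasureTheory.Measure X)
    (r : ℝ≥0∞) (f : X → ℝ≥0∞) : ℝ≥0∞ :=
  ⨆ (A : Set X) (_ : MeasurableSet A), ellSize μ ν r f A

/-- The super level measure `μ(ℓ^r(f) > λ)`. -/
def superLevel {X : Type*} [MeasurableSpace X] (μ : Set X → ℝ≥0∞) (ν : MeasureTheory.Measure X)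
    (r : ℝ≥0∞) (f : X → ℝ≥0∞) (lam : ℝ≥0∞) : ℝ≥0∞ :=
  ⨅ (A : Set X) (_ : MeasurableSet A)
    (_ : outerSup μ ν r (Aᶜ.indicator f) ≤ lam), μ A

/-- The outer `L^p(ℓ^r)` quasi-norm,
`‖f‖_{L^p(ℓ^r)} = (∫_0^∞ p λ^{p-1} μ(ℓ^r(f) > λ) dλ)^{1/p}` for `p < ∞`. -/
def outerLp {X : Type*} [MeasurableSpace X] (μ : Set X → ℝ≥0∞) (ν : MeasureTheory.Measure X)
    (p r : ℝ≥0∞) (f : X → ℝ≥0∞) : ℝ≥0∞ :=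
  if p = ∞ then outerSup μ ν r f
  else (∫⁻ l in Ioi (0:ℝ),
      ENNReal.ofReal (p.toReal * l ^ (p.toReal - 1)) *
        superLevel μ ν r f (ENNReal.ofReal l)) ^ p.toReal⁻¹

/-- The weak outer `L^{p,∞}(ℓ^r)` quasi-norm,
`‖f‖_{L^{p,∞}(ℓ^r)} = (sup_{λ>0} λ^p μ(ℓ^r(f) > λ))^{1/p}` for `p < ∞`. -/
def outerLpWeak {X : Type*} [MeasurableSpace X] (μ : Set X → ℝ≥0∞) (ν : MeasureTheory.Measure X)
    (p r : ℝ≥0∞) (f : X → ℝ≥0∞) : ℝ≥0∞ :=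
  if p = ∞ then outerSup μ ν r f
  else (⨆ (lam : ℝ≥0∞) (_ : 0 < lam), lam ^ p.toReal * superLevel μ ν r f lam) ^ p.toReal⁻¹

/-- The upper half space `ℝ^d × ℝ` (only the part `t > 0` carries mass). -/
abbrev UHS (d : ℕ) : Type := (Fin d → ℝ) × ℝ

/-- The measure `t⁻¹ dy dt` on the upper half space (vanishing on `{t ≤ 0}`). -/
def uhsMeasure (d : ℕ) : MeasureTheory.Measure (UHS d) :=
  (MeasureTheory.volume : MeasureTheory.Measure (Fin d → ℝ)).prod
    (MeasureTheory.volume.withDensity fun t => ENNReal.ofReal t⁻¹)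

namespace ENNReal

theorem rpow_mul_rpow_le_of_le {x y c : ℝ≥0∞} {θ₁ θ₂ : ℝ} (hθ₁ : 0 ≤ θ₁) (hθ₂ : 0 ≤ θ₂)
    (hθ : θ₁ + θ₂ = 1) (hx : x ≤ c) (hy : y ≤ c) : x ^ θ₁ * y ^ θ₂ ≤ c :=
  calc x ^ θ₁ * y ^ θ₂ ≤ c ^ θ₁ * c ^ θ₂ := by gcongr
    _ = c := by rw [← rpow_add_of_nonneg _ _ hθ₁ hθ₂, hθ, rpow_one]

theorem le_rpow_div_mul_rpow_div_of_rpow_le {x y z : ℝ≥0∞} {b α β : ℝ} (hb : 0 < b)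
    (h : z ^ b ≤ x ^ α * y ^ β) : z ≤ x ^ (α / b) * y ^ (β / b) :=
  calc z = (z ^ b) ^ b⁻¹ := (rpow_rpow_inv hb.ne' z).symm
    _ ≤ (x ^ α * y ^ β) ^ b⁻¹ := by gcongr
    _ = x ^ (α / b) * y ^ (β / b) := by
      rw [mul_rpow_of_nonneg _ _ (inv_nonneg.2 hb.le), ← rpow_mul, ← rpow_mul, div_eq_mul_inv,
        div_eq_mul_inv]

end ENNReal

section Size

variable {X : Type*} [MeasurableSpace X] {μ : Set X → ℝ≥0∞} {ν : Measure X}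

theorem ellSize_top (f : X → ℝ≥0∞) (A : Set X) :
    ellSize μ ν ∞ f A = essSup f (ν.restrict A) :=
  if_pos rfl

theorem ellSize_rpow_toReal {r : ℝ≥0∞} (hr₀ : r ≠ 0) (hr : r ≠ ∞) (f : X → ℝ≥0∞)
    (A : Set X) :
    ellSize μ ν r f A ^ r.toReal = (μ A)⁻¹ * ∫⁻ x in A, f x ^ r.toReal ∂ν := by
  rw [ellSize, if_neg hr, ENNReal.rpow_inv_rpow (ENNReal.toReal_pos hr₀ hr).ne']

theorem ellSize_mono (r : ℝ≥0∞) {f g : X → ℝ≥0∞} (hfg : f ≤ g) (A : Set X) :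
    ellSize μ ν r f A ≤ ellSize μ ν r g A := by
  unfold ellSize
  split
  · exact essSup_mono_ae (Filter.Eventually.of_forall hfg)
  · gcongr with x
    exact hfg x

theorem ellSize_le_outerSup (r : ℝ≥0∞) (f : X → ℝ≥0∞) {A : Set X} (hA : MeasurableSet A) :
    ellSize μ ν r f A ≤ outerSup μ ν r f :=
  le_iSup₂ (f := fun A (_ : MeasurableSet A) => ellSize μ ν r f A) A hA

theorem ellSize_rpow_le_rpow_mul_rpow {r₁ r r₂ : ℝ≥0∞} (hr₁₀ : r₁ ≠ 0) (hr₁ : r₁ ≠ ∞)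
    (hr₀ : r ≠ 0) (hr : r ≠ ∞) (hr₂₀ : r₂ ≠ 0) (hr₂ : r₂ ≠ ∞) {θ : ℝ} (hθ₀ : 0 ≤ θ)
    (hθ₁ : θ ≤ 1) (hθ : θ * r₁.toReal + (1 - θ) * r₂.toReal = r.toReal) {f : X → ℝ≥0∞}
    (hf : Measurable f) (A : Set X) :
    ellSize μ ν r f A ^ r.toReal ≤
      (ellSize μ ν r₁ f A ^ r₁.toReal) ^ θ * (ellSize μ ν r₂ f A ^ r₂.toReal) ^ (1 - θ) := by
  have hθ' : 0 ≤ 1 - θ := sub_nonneg.2 hθ₁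
  have hsplit (x : X) :
      f x ^ r.toReal = (f x ^ r₁.toReal) ^ θ * (f x ^ r₂.toReal) ^ (1 - θ) := by
    rw [← ENNReal.rpow_mul, ← ENNReal.rpow_mul,
      ← ENNReal.rpow_add_of_nonneg _ _ (by positivity) (by positivity), ← hθ]
    ring_nf
  have hholder := ENNReal.lintegral_mul_norm_pow_le (μ := ν.restrict A)
    (hf.pow_const r₁.toReal).aemeasurable (hf.pow_const r₂.toReal).aemeasurable hθ₀ hθ'
    (add_sub_cancel θ 1)
  simp_rw [← hsplit] at hholder
  rw [ellSize_rpow_toReal hr₀ hr, ellSize_rpow_toReal hr₁₀ hr₁, ellSize_rpow_toReal hr₂₀ hr₂]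
  set u := (μ A)⁻¹
  set I₁ := ∫⁻ x in A, f x ^ r₁.toReal ∂ν
  set I₂ := ∫⁻ x in A, f x ^ r₂.toReal ∂ν
  calc u * ∫⁻ x in A, f x ^ r.toReal ∂ν ≤ (u ^ θ * u ^ (1 - θ)) * (I₁ ^ θ * I₂ ^ (1 - θ)) := by
        rw [← ENNReal.rpow_add_of_nonneg _ _ hθ₀ hθ', add_sub_cancel, ENNReal.rpow_one]
        gcongr
    _ = (u * I₁) ^ θ * (u * I₂) ^ (1 - θ) := by
        rw [ENNReal.mul_rpow_of_nonneg _ _ hθ₀, ENNReal.mul_rpow_of_nonneg _ _ hθ']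
        ring

theorem ellSize_rpow_le_mul_ellSize_top {r₁ r : ℝ≥0∞} (hr₁₀ : r₁ ≠ 0) (h₁ : r₁ ≤ r)
    (hr : r ≠ ∞) {f : X → ℝ≥0∞} (hf : Measurable f) (A : Set X) :
    ellSize μ ν r f A ^ r.toReal ≤
      ellSize μ ν r₁ f A ^ r₁.toReal * ellSize μ ν ∞ f A ^ (r.toReal - r₁.toReal) := by
  have hr₁ : r₁ ≠ ∞ := ne_top_of_le_ne_top hr h₁
  have hgap : 0 ≤ r.toReal - r₁.toReal := sub_nonneg.2 (ENNReal.toReal_mono hr h₁)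
  rw [ellSize_rpow_toReal (pos_of_ne_zero hr₁₀ |>.trans_le h₁).ne' hr,
    ellSize_rpow_toReal hr₁₀ hr₁, ellSize_top]
  set M := essSup f (ν.restrict A)
  have hpoint : ∀ᵐ x ∂ν.restrict A,
      f x ^ r.toReal ≤ M ^ (r.toReal - r₁.toReal) * f x ^ r₁.toReal := by
    filter_upwards [ae_le_essSup (f := f) (μ := ν.restrict A)] with x hx
    calc f x ^ r.toReal = f x ^ (r.toReal - r₁.toReal) * f x ^ r₁.toReal := by
          rw [← ENNReal.rpow_add_of_nonneg _ _ hgap ENNReal.toReal_nonneg, sub_add_cancel]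
      _ ≤ M ^ (r.toReal - r₁.toReal) * f x ^ r₁.toReal := by gcongr
  calc (μ A)⁻¹ * ∫⁻ x in A, f x ^ r.toReal ∂ν
      ≤ (μ A)⁻¹ * ∫⁻ x in A, M ^ (r.toReal - r₁.toReal) * f x ^ r₁.toReal ∂ν := by
        gcongr (μ A)⁻¹ * ?_
        exact lintegral_mono_ae hpoint
    _ = (μ A)⁻¹ * (∫⁻ x in A, f x ^ r₁.toReal ∂ν) * M ^ (r.toReal - r₁.toReal) := by
        rw [lintegral_const_mul _ (hf.pow_const _)]
        ring

end Size

section Interpolation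

variable {X : Type*} [MeasurableSpace X] {μ : Set X → ℝ≥0∞} {ν : Measure X}
  {r₁ r r₂ : ℝ≥0∞}

theorem exists_ellSize_le_rpow_mul_rpow (hr₁ : 0 < r₁) (h₁ : r₁ < r) (h₂ : r < r₂) :
    ∃ θ₁ θ₂ : ℝ, 0 ≤ θ₁ ∧ 0 ≤ θ₂ ∧ θ₁ + θ₂ = 1 ∧
      ∀ f : X → ℝ≥0∞, Measurable f → ∀ A : Set X,
        ellSize μ ν r f A ≤ ellSize μ ν r₁ f A ^ θ₁ * ellSize μ ν r₂ f A ^ θ₂ := by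
  have hr : r ≠ ∞ := h₂.ne_top
  have hr₁_top : r₁ ≠ ∞ := h₁.ne_top
  have hr_pos : 0 < r.toReal := ENNReal.toReal_pos (hr₁.trans h₁).ne' hr
  have hr₁_pos : 0 < r₁.toReal := ENNReal.toReal_pos hr₁.ne' hr₁_top
  have hr₁_lt : r₁.toReal < r.toReal := (ENNReal.toReal_lt_toReal hr₁_top hr).2 h₁
  suffices ∃ α β : ℝ, 0 ≤ α ∧ 0 ≤ β ∧ α + β = r.toReal ∧
      ∀ f : X → ℝ≥0∞, Measurable f → ∀ A : Set X,
        ellSize μ ν r f A ^ r.toReal ≤ ellSize μ ν r₁ f A ^ α * ellSize μ ν r₂ f A ^ β by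
    obtain ⟨α, β, hα, hβ, hαβ, h⟩ := this
    exact ⟨α / r.toReal, β / r.toReal, by positivity, by positivity,
      by rw [← add_div, hαβ, div_self hr_pos.ne'],
      fun f hf A => ENNReal.le_rpow_div_mul_rpow_div_of_rpow_le hr_pos (h f hf A)⟩
  rcases eq_or_ne r₂ ∞ with rfl | hr₂
  · exact ⟨r₁.toReal, r.toReal - r₁.toReal, hr₁_pos.le, sub_nonneg.2 hr₁_lt.le, add_sub_cancel _ _,
      fun f hf A => ellSize_rpow_le_mul_ellSize_top hr₁.ne' h₁.le hr hf A⟩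
  have hr_lt : r.toReal < r₂.toReal := (ENNReal.toReal_lt_toReal hr hr₂).2 h₂
  set θ := (r₂.toReal - r.toReal) / (r₂.toReal - r₁.toReal)
  have hθ₀ : 0 ≤ θ := div_nonneg (by linarith) (by linarith)
  have hθ₁ : θ ≤ 1 := (div_le_one (by linarith)).2 (by linarith)
  have hθ : θ * r₁.toReal + (1 - θ) * r₂.toReal = r.toReal := by
    have hθ_mul : θ * (r₂.toReal - r₁.toReal) = r₂.toReal - r.toReal :=
      div_mul_cancel₀ _ (by linarith)
    linarith
  refine ⟨r₁.toReal * θ, r₂.toReal * (1 - θ), by positivity,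
    mul_nonneg ENNReal.toReal_nonneg (sub_nonneg.2 hθ₁), by linarith, fun f hf A => ?_⟩
  rw [ENNReal.rpow_mul, ENNReal.rpow_mul]
  exact ellSize_rpow_le_rpow_mul_rpow hr₁.ne' hr₁_top (hr₁.trans h₁).ne' hr
    (hr₁.trans (h₁.trans h₂)).ne' hr₂ hθ₀ hθ₁ hθ hf A

theorem ellSize_le_max (hr₁ : 0 < r₁) (h₁ : r₁ < r) (h₂ : r < r₂) {f : X → ℝ≥0∞}
    (hf : Measurable f) (A : Set X) :
    ellSize μ ν r f A ≤ max (ellSize μ ν r₁ f A) (ellSize μ ν r₂ f A) := by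
  obtain ⟨θ₁, θ₂, hθ₁, hθ₂, hθ, h⟩ :=
    exists_ellSize_le_rpow_mul_rpow (μ := μ) (ν := ν) hr₁ h₁ h₂
  exact (h f hf A).trans
    (ENNReal.rpow_mul_rpow_le_of_le hθ₁ hθ₂ hθ le_sup_left le_sup_right)

theorem outerSup_le_max (hr₁ : 0 < r₁) (h₁ : r₁ < r) (h₂ : r < r₂) {g f₁ f₂ : X → ℝ≥0∞}
    (hg : Measurable g) (hgf₁ : g ≤ f₁) (hgf₂ : g ≤ f₂) :
    outerSup μ ν r g ≤ max (outerSup μ ν r₁ f₁) (outerSup μ ν r₂ f₂) :=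
  iSup₂_le fun A hA => (ellSize_le_max hr₁ h₁ h₂ hg A).trans <| max_le_max
    ((ellSize_mono r₁ hgf₁ A).trans (ellSize_le_outerSup r₁ f₁ hA))
    ((ellSize_mono r₂ hgf₂ A).trans (ellSize_le_outerSup r₂ f₂ hA))

end Interpolation

section SuperLevel

variable {X : Type*} [MeasurableSpace X] {μ : Set X → ℝ≥0∞} {ν : Measure X}
  {r : ℝ≥0∞} {f : X → ℝ≥0∞}

theorem superLevel_le {t : ℝ≥0∞} {A : Set X} (hA : MeasurableSet A)
    (hA_sup : outerSup μ ν r (Aᶜ.indicator f) ≤ t) : superLevel μ ν r f t ≤ μ A :=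
  iInf_le_of_le A (iInf_le_of_le hA (iInf_le _ hA_sup))

theorem superLevel_antitone : Antitone (superLevel μ ν r f) :=
  fun _ _ hst => le_iInf₂ fun _ hA => le_iInf fun hA_sup => superLevel_le hA (hA_sup.trans hst)

theorem superLevel_le_add (μ : OuterMeasure X) {r₁ r₂ : ℝ≥0∞} (hr₁ : 0 < r₁) (h₁ : r₁ < r)
    (h₂ : r < r₂) (hf : Measurable f) (t : ℝ≥0∞) :
    superLevel μ ν r f t ≤ superLevel μ ν r₁ f t + superLevel μ ν r₂ f t := by
  refine ENNReal.le_iInf₂_add_iInf₂ fun A₁ hA₁ A₂ hA₂ =>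
    ENNReal.le_iInf_add_iInf fun hA₁_sup hA₂_sup => ?_
  have hcompl : ∀ {B}, B ⊆ A₁ ∪ A₂ → (A₁ ∪ A₂)ᶜ.indicator f ≤ Bᶜ.indicator f := fun hB =>
    indicator_le_indicator_of_subset (compl_subset_compl.2 hB) fun _ => zero_le
  have hsup : outerSup μ ν r ((A₁ ∪ A₂)ᶜ.indicator f) ≤ t :=
    (outerSup_le_max hr₁ h₁ h₂ (hf.indicator (hA₁.union hA₂).compl)
      (hcompl subset_union_left) (hcompl subset_union_right)).trans (max_le hA₁_sup hA₂_sup)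
  exact (superLevel_le (hA₁.union hA₂) hsup).trans (measure_union_le A₁ A₂)

variable {p r₁ r₂ : ℝ≥0∞}

-- `(ENNReal.ofReal p.toReal⁻¹)⁻¹ = p` for `0 < p < ∞`, and `ENNReal.LpAddConst p` is the constant
-- of the quasi-triangle inequality for `x ↦ x ^ p.toReal⁻¹`.
theorem outerLp_le_of_superLevel_le_add (hp : p ≠ ∞)
    (h : ∀ t, superLevel μ ν r f t ≤ superLevel μ ν r₁ f t + superLevel μ ν r₂ f t) :
    outerLp μ ν p r f ≤ ENNReal.LpAddConst (ENNReal.ofReal p.toReal⁻¹)⁻¹ *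
      (outerLp μ ν p r₁ f + outerLp μ ν p r₂ f) := by
  simp only [outerLp, if_neg hp]
  refine le_trans ?_ (ENNReal.rpow_add_le_mul_rpow_add_rpow' _ _
    (inv_nonneg.2 ENNReal.toReal_nonneg))
  have hmeas : Measurable fun l : ℝ => ENNReal.ofReal (p.toReal * l ^ (p.toReal - 1)) *
      superLevel μ ν r₁ f (ENNReal.ofReal l) :=
    (measurable_const.mul (measurable_id.pow_const _)).ennreal_ofReal.mul
      (superLevel_antitone.comp_monotone fun _ _ => ENNReal.ofReal_le_ofReal).measurable
  rw [← lintegral_add_left hmeas]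
  gcongr with l
  rw [← mul_add]
  gcongr
  exact h _

theorem outerLpWeak_le_of_superLevel_le_add (hp : p ≠ ∞)
    (h : ∀ t, superLevel μ ν r f t ≤ superLevel μ ν r₁ f t + superLevel μ ν r₂ f t) :
    outerLpWeak μ ν p r f ≤ ENNReal.LpAddConst (ENNReal.ofReal p.toReal⁻¹)⁻¹ *
      (outerLpWeak μ ν p r₁ f + outerLpWeak μ ν p r₂ f) := by
  simp only [outerLpWeak, if_neg hp]
  refine le_trans ?_ (ENNReal.rpow_add_le_mul_rpow_add_rpow' _ _
    (inv_nonneg.2 ENNReal.toReal_nonneg))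
  gcongr
  refine iSup₂_le fun t ht => ?_
  calc t ^ p.toReal * superLevel μ ν r f t
      ≤ t ^ p.toReal * superLevel μ ν r₁ f t + t ^ p.toReal * superLevel μ ν r₂ f t := by
        rw [← mul_add]
        gcongr
        exact h t
    _ ≤ _ := add_le_add
        (le_iSup₂ (f := fun t (_ : 0 < t) => t ^ p.toReal * superLevel μ ν r₁ f t) t ht)
        (le_iSup₂ (f := fun t (_ : 0 < t) => t ^ p.toReal * superLevel μ ν r₂ f t) t ht)

end SuperLevel

theorem log_convexity_outer_Lp_general {X : Type*} [MeasurableSpace X]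
    (μ : Set X → ℝ≥0∞) (ν : Measure X)
    (hμ0 : μ ∅ = 0)
    (hmono : ∀ A B : Set X, A ⊆ B → μ A ≤ μ B)
    (hsub : ∀ s : ℕ → Set X, μ (⋃ n, s n) ≤ ∑' n, μ (s n))
    (p r₁ r r₂ : ℝ≥0∞) (hr₁ : 0 < r₁) (h₁ : r₁ < r) (h₂ : r < r₂) :
    ∃ C : ℝ≥0∞, C ≠ ∞ ∧
      ∀ f : X → ℝ≥0∞, Measurable f →
        outerLp μ ν p r f ≤ C * (outerLp μ ν p r₁ f + outerLp μ ν p r₂ f) ∧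
        outerLpWeak μ ν p r f ≤ C * (outerLpWeak μ ν p r₁ f + outerLpWeak μ ν p r₂ f) := by
  let μ' : OuterMeasure X :=
    { measureOf := μ, empty := hμ0, mono := hmono _ _, iUnion_nat := fun s _ => hsub s }
  rcases eq_or_ne p ∞ with rfl | hp
  · refine ⟨1, ENNReal.one_ne_top, fun f hf => ?_⟩
    have hsup : outerSup μ ν r f ≤ outerSup μ ν r₁ f + outerSup μ ν r₂ f :=
      (outerSup_le_max hr₁ h₁ h₂ hf le_rfl le_rfl).trans (max_le le_self_add le_add_self)
    simpa only [outerLp, outerLpWeak, if_pos, one_mul] using ⟨hsup, hsup⟩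
  · refine ⟨ENNReal.LpAddConst (ENNReal.ofReal p.toReal⁻¹)⁻¹, (ENNReal.LpAddConst_lt_top _).ne,
      fun f hf => ?_⟩
    have hlevel := superLevel_le_add μ' (ν := ν) hr₁ h₁ h₂ hf
    exact ⟨outerLp_le_of_superLevel_le_add hp hlevel,
      outerLpWeak_le_of_superLevel_le_add hp hlevel⟩

/-- Logarithmic convexity of outer `L^p` quasi-norms in the size exponent
(Proposition 8.6): on a metric space `X` with a Borel measure `ν` and an outer measure
`μ`, for every `0 < p ≤ ∞` and `0 < r₁ < r < r₂ ≤ ∞` there is a constant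
`C = C(p,r,r₁,r₂)` such that for every nonnegative Borel function `f`,
`‖f‖_{L^p(ℓ^r)} ≤ C (‖f‖_{L^p(ℓ^{r₁})} + ‖f‖_{L^p(ℓ^{r₂})})` and likewise for the weak
quasi-norms. -/
theorem log_convexity_outer_Lp {X : Type*} [MetricSpace X] [MeasurableSpace X]
    [BorelSpace X] (μ : Set X → ℝ≥0∞) (ν : Measure X)
    (hμ0 : μ ∅ = 0)
    (hmono : ∀ A B : Set X, A ⊆ B → μ A ≤ μ B)
    (hsub : ∀ s : ℕ → Set X, μ (⋃ n, s n) ≤ ∑' n, μ (s n))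
    (p r₁ r r₂ : ℝ≥0∞) (hp : 0 < p) (hr₁ : 0 < r₁) (h₁ : r₁ < r) (h₂ : r < r₂) :
    ∃ C : ℝ≥0∞, C ≠ ∞ ∧
      ∀ f : X → ℝ≥0∞, Measurable f →
        outerLp μ ν p r f ≤ C * (outerLp μ ν p r₁ f + outerLp μ ν p r₂ f) ∧
        outerLpWeak μ ν p r f ≤ C * (outerLpWeak μ ν p r₁ f + outerLpWeak μ ν p r₂ f) :=
  log_convexity_outer_Lp_general μ ν hμ0 hmono hsub p r₁ r r₂ hr₁ h₁ h₂

end
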